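/- arXiv:1409.3974 — 6 statements merged into one kernel-verified Lean document; each statement's English description precedes it below -/
import Mathlib

section
/- Let R be a ring and let f(x) ∈ R[[x]] be a formal power series. If the constant term f(0) ∈ R is optimally J-clean, then f(x) is strongly J-clean in R[[x]]. -/
/-!
Let `a = f(0)` and let `e` be the idempotent of the optimal J-cleanness of `a`. We conjugate `f`
by a power series `φ` with `φ(0) = 1` into a series all of whose coefficients commute with `e`;
then `C e` makes `φ⁻¹ f φ` strongly J-clean (its constant term is still `a`), and conjugating back
gives the same for `f`. The coefficients of `φ` are chosen one at a time: changing the `n`-th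
coefficient of `φ` by `c`, keeping the lower ones, changes the `n`-th coefficient of `φ⁻¹ f φ` by
`a c - c a`. Applied to `b = t e - e t`, optimality yields `c` with
`t + (a c - c a) = e t e + (1 - e) t (1 - e)`, which commutes with `e`.
-/

universe u

def IsStronglyJClean {R : Type u} [Ring R] (a : R) : Prop :=
  ∃ e : R, IsIdempotentElem e ∧ a - e ∈ (⊥ : Ideal R).jacobson ∧ a * e = e * a

def IsOptimallyJClean {R : Type u} [Ring R] (a : R) : Prop :=
  ∃ e : R, IsIdempotentElem e ∧ a - e ∈ (⊥ : Ideal R).jacobson ∧ a * e = e * a ∧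
    ∀ b : R, ∃ c : R, a * c - c * a = e * b - b * e

section Ring

variable {R : Type*} [Ring R]

theorem IsIdempotentElem.exists_commute_add_commutator {a e : R} (he : IsIdempotentElem e)
    (hopt : ∀ b, ∃ c, a * c - c * a = e * b - b * e) (t : R) :
    ∃ c, Commute e (t + (a * c - c * a)) := by
  obtain ⟨c, hc⟩ := hopt (t * e - e * t)
  refine ⟨c, ?_⟩
  have hre : ∀ x : R, x * e * e = x * e := fun x => by rw [mul_assoc, he.eq]
  rw [hc, Commute, SemiconjBy]
  simp only [mul_sub, sub_mul, mul_add, add_mul, ← mul_assoc, he.eq, hre]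
  abel

theorem isUnit_one_add_of_mem_jacobson_bot {w : R} (hw : w ∈ (⊥ : Ideal R).jacobson) :
    IsUnit (1 + w) := by
  have left_inv : ∀ v ∈ (⊥ : Ideal R).jacobson, ∃ z, z * (1 + v) = 1 := fun v hv => by
    obtain ⟨z, hz⟩ := Ideal.mem_jacobson_iff.1 hv 1
    rw [mul_one, Ideal.mem_bot] at hz
    exact ⟨z, by linear_combination (norm := noncomm_ring) hz⟩
  obtain ⟨z, hz⟩ := left_inv w hw
  -- `z = 1 - z * w` is again of the form `1 + v` with `v ∈ J`, so it has a left inverse too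
  obtain ⟨y, hy⟩ := left_inv (-(z * w)) (neg_mem (Ideal.mul_mem_left _ z hw))
  have hzw : 1 + -(z * w) = z := by linear_combination (norm := noncomm_ring) -hz
  rw [hzw] at hy
  exact ⟨⟨1 + w, z, left_inv_eq_right_inv hy hz ▸ hy, hz⟩, rfl⟩

theorem IsStronglyJClean.units_conj {a : R} (ha : IsStronglyJClean a) (u : Rˣ) :
    IsStronglyJClean (u * a * u⁻¹ : R) := by
  obtain ⟨e, he, hJ, hae⟩ := ha
  refine ⟨u * e * u⁻¹, ?_, ?_, ?_⟩
  · simp only [IsIdempotentElem, mul_assoc, Units.inv_mul_cancel_left, ← mul_assoc e e, he.eq]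
  · have : (u * a * u⁻¹ : R) - u * e * u⁻¹ = u * (a - e) * u⁻¹ := by noncomm_ring
    rw [this]
    exact Ideal.mul_mem_right _ _ (Ideal.mul_mem_left _ _ hJ)
  · simp only [mul_assoc, Units.inv_mul_cancel_left, ← mul_assoc a e, hae]

end Ring

namespace PowerSeries

open scoped Ring

variable {R : Type*} [Ring R]

theorem mem_jacobson_bot_of_constantCoeff_mem {g : R⟦X⟧}
    (hg : constantCoeff g ∈ (⊥ : Ideal R).jacobson) : g ∈ (⊥ : Ideal R⟦X⟧).jacobson := by
  refine Ideal.mem_jacobson_iff.2 fun y => ?_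
  have hu : IsUnit (1 + y * g) := by
    rw [isUnit_iff_constantCoeff, map_add, map_mul, map_one]
    exact isUnit_one_add_of_mem_jacobson_bot (Ideal.mul_mem_left _ _ hg)
  refine ⟨(1 + y * g)⁻¹ʳ, ?_⟩
  rw [Ideal.mem_bot]
  linear_combination (norm := noncomm_ring) Ring.inverse_mul_cancel _ hu

theorem commute_C_iff {r : R} {φ : R⟦X⟧} : Commute (C r) φ ↔ ∀ n, Commute r (coeff n φ) := by
  simp only [Commute, SemiconjBy, PowerSeries.ext_iff, coeff_C_mul, coeff_mul_C]

theorem isStronglyJClean_of_commute_C {g : R⟦X⟧} {e : R} (he : IsIdempotentElem e)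
    (hJ : constantCoeff g - e ∈ (⊥ : Ideal R).jacobson) (hcomm : Commute (C e) g) :
    IsStronglyJClean g :=
  ⟨C e, he.map C, mem_jacobson_bot_of_constantCoeff_mem (by rwa [map_sub, constantCoeff_C]),
    hcomm.eq.symm⟩

theorem constantCoeff_ringInverse {φ : R⟦X⟧} (hφ : constantCoeff φ = 1) :
    constantCoeff φ⁻¹ʳ = 1 := by
  have := congrArg constantCoeff
    (Ring.inverse_mul_cancel φ (isUnit_iff_constantCoeff.2 (hφ ▸ isUnit_one)))
  rwa [map_mul, map_one, hφ, mul_one] at this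

theorem constantCoeff_ringInverse_mul_mul {φ : R⟦X⟧} (hφ : constantCoeff φ = 1) (f : R⟦X⟧) :
    constantCoeff (φ⁻¹ʳ * f * φ) = constantCoeff f := by
  rw [map_mul, map_mul, constantCoeff_ringInverse hφ, hφ, one_mul, mul_one]

theorem coeff_ringInverse_mul_mul_sub {φ ψ : R⟦X⟧} (hφ : constantCoeff φ = 1)
    (hψ : constantCoeff ψ = 1) (f : R⟦X⟧) {n : ℕ} (hagree : ∀ k < n, coeff k φ = coeff k ψ) :
    coeff n (φ⁻¹ʳ * f * φ) - coeff n (ψ⁻¹ʳ * f * ψ) =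
      constantCoeff f * (coeff n φ - coeff n ψ) - (coeff n φ - coeff n ψ) * constantCoeff f := by
  have hφu : IsUnit φ := isUnit_iff_constantCoeff.2 (hφ ▸ isUnit_one)
  have hψu : IsUnit ψ := isUnit_iff_constantCoeff.2 (hψ ▸ isUnit_one)
  have coeff_X_pow_mul_self (p : R⟦X⟧) : coeff n (X ^ n * p) = constantCoeff p := by
    rw [← coeff_zero_eq_constantCoeff_apply, ← coeff_X_pow_mul p n 0, zero_add]
  obtain ⟨D, hD⟩ : X ^ n ∣ φ - ψ :=
    X_pow_dvd_iff.2 fun k hk => by rw [map_sub, hagree k hk, sub_self]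
  have hδ : constantCoeff D = coeff n φ - coeff n ψ := by
    rw [← coeff_X_pow_mul_self, ← hD, map_sub]
  set G := ψ⁻¹ʳ * f * ψ
  have hψG : ψ * G = f * ψ := by
    simp only [G, ← mul_assoc, Ring.mul_inverse_cancel ψ hψu, one_mul]
  have hdiff : φ⁻¹ʳ * f * φ - G = X ^ n * (φ⁻¹ʳ * (f * D - D * G)) :=
    calc φ⁻¹ʳ * f * φ - G = φ⁻¹ʳ * (f * φ - φ * G) := by
          rw [mul_sub, ← mul_assoc, ← mul_assoc, Ring.inverse_mul_cancel φ hφu, one_mul,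
            mul_assoc]
      _ = φ⁻¹ʳ * (f * (φ - ψ) - (φ - ψ) * G) := by
          rw [mul_sub f, sub_mul φ, hψG, sub_sub_sub_cancel_right]
      _ = X ^ n * (φ⁻¹ʳ * (f * D - D * G)) := by
          rw [hD, ← mul_assoc f, (commute_X_pow f n).eq, mul_assoc, mul_assoc, ← mul_sub,
            ← mul_assoc, (commute_X_pow _ n).eq, mul_assoc]
  rw [← map_sub, hdiff, coeff_X_pow_mul_self, map_mul, map_sub, map_mul, map_mul,
    constantCoeff_ringInverse hφ, constantCoeff_ringInverse_mul_mul hψ, hδ, one_mul]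

noncomputable def conjugatorCoeff (f : R⟦X⟧) (d : R → R) : ℕ → R
  | 0 => 1
  | n + 1 =>
    let ψ : R⟦X⟧ := mk fun k => if k < n + 1 then conjugatorCoeff f d k else 0
    d (coeff (n + 1) (ψ⁻¹ʳ * f * ψ))

theorem exists_commute_C_ringInverse_mul_mul (f : R⟦X⟧) {e : R}
    (he : Commute e (constantCoeff f))
    (hcorr : ∀ t, ∃ c, Commute e (t + (constantCoeff f * c - c * constantCoeff f))) :
    ∃ φ : R⟦X⟧, constantCoeff φ = 1 ∧ Commute (C e) (φ⁻¹ʳ * f * φ) := by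
  choose d hd using hcorr
  have hφ : constantCoeff (mk (conjugatorCoeff f d)) = 1 := by
    rw [← coeff_zero_eq_constantCoeff_apply, coeff_mk, conjugatorCoeff]
  refine ⟨mk (conjugatorCoeff f d), hφ, commute_C_iff.2 fun n => ?_⟩
  cases n with
  | zero => rwa [coeff_zero_eq_constantCoeff_apply, constantCoeff_ringInverse_mul_mul hφ]
  | succ n =>
    set ψ : R⟦X⟧ := mk fun k => if k < n + 1 then conjugatorCoeff f d k else 0
    have hψ : constantCoeff ψ = 1 := by
      rw [← coeff_zero_eq_constantCoeff_apply, coeff_mk, if_pos n.succ_pos, conjugatorCoeff]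
    have key := coeff_ringInverse_mul_mul_sub hφ hψ f (n := n + 1) fun k hk => by
      rw [coeff_mk, coeff_mk, if_pos hk]
    rw [sub_eq_iff_eq_add', coeff_mk, coeff_mk, if_neg (lt_irrefl _), sub_zero,
      conjugatorCoeff] at key
    rw [key]
    exact hd _

end PowerSeries

theorem stronglyJClean_powerSeries_of_optimallyJClean_constantCoeff {R : Type u} [Ring R]
    (f : PowerSeries R) (h : IsOptimallyJClean (PowerSeries.constantCoeff f)) :
    IsStronglyJClean f := by
  obtain ⟨e, he, hJ, hae, hopt⟩ := h
  obtain ⟨φ, hφ, hcomm⟩ := PowerSeries.exists_commute_C_ringInverse_mul_mul f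
    (Commute.symm hae) (he.exists_commute_add_commutator hopt)
  have hG := PowerSeries.isStronglyJClean_of_commute_C he
    (by rwa [PowerSeries.constantCoeff_ringInverse_mul_mul hφ]) hcomm
  obtain ⟨u, rfl⟩ : IsUnit φ := PowerSeries.isUnit_iff_constantCoeff.2 (hφ ▸ isUnit_one)
  rw [Ring.inverse_unit] at hG
  simpa [mul_assoc] using hG.units_conj u
end

section
/- If R is a 2-projective-free ring, then the formal power series ring R[[x]] is 2-projective-free. -/
universe u

/-- A ring is 2-projective-free if every 2-generated projective module is free of
constant rank, i.e. isomorphic to `Rⁿ` for a unique `n ∈ {0, 1, 2}`. -/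
def TwoProjectiveFree (R : Type u) [Ring R] : Prop :=
  ∀ (M : Type u) [AddCommGroup M] [Module R M], Module.Projective R M →
    (∃ s : Fin 2 → M, Submodule.span R (Set.range s) = ⊤) →
    ∃! n : ℕ, n ≤ 2 ∧ Nonempty (M ≃ₗ[R] (Fin n → R))

/-!
Write `S = R⟦X⟧`. A 2-generated projective `S`-module is the range of an idempotent `e` on `S²`.
Its reduction `ē` modulo `X` is an idempotent on `R²` with 2-generated projective range, hence
`ē = a ∘ b` with `b ∘ a = 1` on `Rⁿ`; lifting `a` and `b` coefficientwise gives an idempotent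
`f` on `S²` with range `Sⁿ` and the same reduction as `e`. Idempotents with the same reduction are
conjugate by `f e + (1 - f) (1 - e)`: it reduces to `1`, and a square matrix over `S` with
invertible constant term is invertible. Uniqueness of `n` follows by reducing an isomorphism
`Sᵐ ≅ Sⁿ` modulo `X`.
-/

open Function LinearMap PowerSeries Submodule

section Idempotent

variable {A : Type*} [Ring A] {e f : A}

theorem IsIdempotentElem.conjugator_mul (he : IsIdempotentElem e) (hf : IsIdempotentElem f) :
    (f * e + (1 - f) * (1 - e)) * e = f * (f * e + (1 - f) * (1 - e)) := by
  have hee : (1 - e) * e = 0 := by rw [sub_mul, one_mul, he.eq, sub_self]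
  have hff : f * (1 - f) = 0 := by rw [mul_sub, mul_one, hf.eq, sub_self]
  rw [add_mul, mul_assoc, mul_assoc, he.eq, hee, mul_add, ← mul_assoc, ← mul_assoc, hf.eq, hff,
    mul_zero, zero_mul]

theorem IsIdempotentElem.map_conjugator {B F : Type*} [Ring B] [FunLike F A B] [RingHomClass F A B]
    (φ : F) (he : IsIdempotentElem e) (h : φ f = φ e) :
    φ (f * e + (1 - f) * (1 - e)) = 1 := by
  simp only [map_add, map_mul, map_sub, map_one, h, (he.map φ).eq, (he.map φ).one_sub.eq,
    add_sub_cancel]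

end Idempotent

section Splitting

variable {A : Type*} [Semiring A] {N F : Type*} [AddCommMonoid N] [Module A N]
  [AddCommMonoid F] [Module A F]

theorem LinearMap.isIdempotentElem_comp_of_comp_eq_id {a : F →ₗ[A] N} {b : N →ₗ[A] F}
    (h : b ∘ₗ a = id) : IsIdempotentElem (a ∘ₗ b) := by
  rw [IsIdempotentElem, Module.End.mul_eq_comp, comp_assoc, ← comp_assoc b, h, id_comp]

noncomputable def LinearMap.rangeCompEquivOfCompEqId {a : F →ₗ[A] N} {b : N →ₗ[A] F}
    (h : b ∘ₗ a = id) : range (a ∘ₗ b) ≃ₗ[A] F :=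
  have hba : LeftInverse b a := fun x => DFunLike.congr_fun h x
  (LinearEquiv.ofEq _ _ (range_comp_of_range_eq_top a (range_eq_top.mpr hba.surjective))).trans
    (LinearEquiv.ofLeftInverse hba).symm

theorem LinearMap.exists_comp_eq_id_of_isIdempotentElem {e : Module.End A N}
    (he : IsIdempotentElem e) (γ : range e ≃ₗ[A] F) :
    ∃ (a : F →ₗ[A] N) (b : N →ₗ[A] F), b ∘ₗ a = id ∧ a ∘ₗ b = e := by
  refine ⟨(range e).subtype ∘ₗ γ.symm, γ ∘ₗ e.rangeRestrict, ?_, ?_⟩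
  · ext x : 1
    have : e.rangeRestrict (γ.symm x) = γ.symm x :=
      Subtype.ext ((LinearMap.IsIdempotentElem.mem_range_iff he).mp (γ.symm x).2)
    simp [this]
  · ext x : 1
    simp

theorem LinearMap.projective_range_of_isIdempotentElem [Module.Projective A N]
    {e : Module.End A N} (he : IsIdempotentElem e) : Module.Projective A (range e) :=
  .of_split (range e).subtype e.rangeRestrict <| by
    ext ⟨x, hx⟩ : 1
    exact Subtype.ext ((LinearMap.IsIdempotentElem.mem_range_iff he).mp hx)

theorem LinearMap.nonempty_range_equiv_of_mul_eq {e f v : Module.End A N} (hv : IsUnit v)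
    (h : v * e = f * v) : Nonempty (range e ≃ₗ[A] range f) := by
  let V := LinearMap.GeneralLinearGroup.generalLinearEquiv A N hv.unit
  have hV : (range e).map (V : N →ₗ[A] N) = range f := by
    rw [← range_comp, show (V : N →ₗ[A] N) ∘ₗ e = f ∘ₗ v from h,
      range_comp_of_range_eq_top f (range_eq_top.mpr ((Module.End.isUnit_iff v).mp hv).2)]
  exact ⟨(V.submoduleMap (range e)).trans (LinearEquiv.ofEq _ _ hV)⟩

theorem exists_span_range_eq_top_of_surjective {ι : Type*} [Finite ι] [DecidableEq ι]
    {f : (ι → A) →ₗ[A] F} (hf : Surjective f) : ∃ s : ι → F, span A (Set.range s) = ⊤ :=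
  ⟨f ∘ Pi.basisFun A ι, by
    rw [Set.range_comp, span_image, (Pi.basisFun A ι).span_eq, Submodule.map_top,
      range_eq_top.mpr hf]⟩

theorem Module.Projective.exists_isIdempotentElem_nonempty_equiv_range {M : Type*}
    [AddCommMonoid M] [Module A M] [Module.Projective A M] {ι : Type*} [Fintype ι] {s : ι → M}
    (hs : span A (Set.range s) = ⊤) :
    ∃ e : Module.End A (ι → A), IsIdempotentElem e ∧ Nonempty (M ≃ₗ[A] range e) := by
  have hπ : Surjective (Fintype.linearCombination A s) := by
    rw [← range_eq_top, Fintype.range_linearCombination, hs]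
  obtain ⟨σ, hσ⟩ := Module.projective_lifting_property _ id hπ
  exact ⟨_, isIdempotentElem_comp_of_comp_eq_id hσ, ⟨(rangeCompEquivOfCompEqId hσ).symm⟩⟩

end Splitting

theorem LinearMap.isUnit_toMatrixRight'_iff {A : Type*} [Semiring A] {n : Type*} [Fintype n]
    [DecidableEq n] {u : Module.End A (n → A)} : IsUnit u.toMatrixRight' ↔ IsUnit u := by
  let ψ : Module.End A (n → A) ≃* (Matrix n n A)ᵐᵒᵖ :=
    { toMatrixRight'.toEquiv.trans MulOpposite.opEquiv with
      map_mul' := fun f g => by simp [Module.End.mul_eq_comp] }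
  rw [← isUnit_op]
  exact MulEquiv.isUnit_map ψ

section MapPi

variable {A B C : Type*} [Semiring A] [Semiring B] [Semiring C] (φ : A →+* B)
  {l m n : Type*} [Fintype l] [DecidableEq l] [Fintype m] [DecidableEq m]

/-- Matrices act on row vectors from the right, which keeps the correspondence with linear maps
valid over a noncommutative ring. -/
noncomputable def LinearMap.mapPi (u : (m → A) →ₗ[A] (n → A)) : (m → B) →ₗ[B] (n → B) :=
  Matrix.toLinearMapRight' (u.toMatrixRight'.map φ)

namespace LinearMap

theorem toMatrixRight'_mapPi (u : (m → A) →ₗ[A] (n → A)) :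
    (mapPi φ u).toMatrixRight' = u.toMatrixRight'.map φ :=
  toMatrixRight'.apply_symm_apply _

theorem mapPi_comp (f : (l → A) →ₗ[A] (m → A)) (g : (m → A) →ₗ[A] (n → A)) :
    mapPi φ (g ∘ₗ f) = mapPi φ g ∘ₗ mapPi φ f := by
  simp [mapPi, Matrix.map_mul]

theorem mapPi_id : mapPi φ (id : (m → A) →ₗ[A] (m → A)) = id := by
  simp [mapPi]

theorem mapPi_mapPi (ψ : B →+* C) (u : (m → A) →ₗ[A] (n → A)) :
    mapPi ψ (mapPi φ u) = mapPi (ψ.comp φ) u := by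
  simp [mapPi, Matrix.map_map]

theorem mapPi_ringHom_id (u : (m → A) →ₗ[A] (n → A)) : mapPi (RingHom.id A) u = u := by
  simp [mapPi]

end LinearMap

noncomputable def Module.End.mapPi : Module.End A (m → A) →+* Module.End B (m → B) where
  toFun := LinearMap.mapPi φ
  map_one' := mapPi_id φ
  map_mul' f g := mapPi_comp φ g f
  map_zero' := by simp [LinearMap.mapPi]
  map_add' f g := by simp [LinearMap.mapPi, Matrix.map_add]

noncomputable def LinearEquiv.mapPi [Fintype n] [DecidableEq n] (γ : (m → A) ≃ₗ[A] (n → A)) :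
    (m → B) ≃ₗ[B] (n → B) :=
  .ofLinearMap (LinearMap.mapPi φ γ) (LinearMap.mapPi φ γ.symm)
    (by rw [← mapPi_comp, γ.comp_symm, mapPi_id]) (by rw [← mapPi_comp, γ.symm_comp, mapPi_id])

end MapPi

namespace PowerSeries

section Matrix

variable {R : Type*} {n : Type*} [Fintype n] [DecidableEq n]

noncomputable def matrixEquiv [Semiring R] : Matrix n n R⟦X⟧ ≃+* (Matrix n n R)⟦X⟧ where
  toFun M := mk fun d => M.map (coeff d)
  invFun φ := Matrix.of fun i j => mk fun d => coeff d φ i j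
  left_inv M := by ext i j d; simp
  right_inv φ := by ext d i j; simp
  map_mul' M N := by
    ext d i j
    simp only [coeff_mk, Matrix.map_apply, Matrix.mul_apply, coeff_mul, map_sum, Matrix.sum_apply]
    exact Finset.sum_comm
  map_add' M N := by ext d i j; simp

theorem constantCoeff_matrixEquiv [Semiring R] (M : Matrix n n R⟦X⟧) :
    constantCoeff (matrixEquiv M) = M.map constantCoeff := by
  ext i j
  simp [matrixEquiv, ← coeff_zero_eq_constantCoeff]

variable [Ring R]

theorem isUnit_of_isUnit_map_constantCoeff {M : Matrix n n R⟦X⟧}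
    (h : IsUnit (M.map constantCoeff)) : IsUnit M := by
  refine (MulEquiv.isUnit_map (matrixEquiv : Matrix n n R⟦X⟧ ≃+* _)).mp ?_
  rwa [isUnit_iff_constantCoeff, constantCoeff_matrixEquiv]

theorem isUnit_of_isUnit_mapPi_constantCoeff {u : Module.End R⟦X⟧ (n → R⟦X⟧)}
    (h : IsUnit (Module.End.mapPi constantCoeff u)) : IsUnit u := by
  have h' : IsUnit (u.toMatrixRight'.map constantCoeff) := by
    rw [← toMatrixRight'_mapPi]
    exact isUnit_toMatrixRight'_iff.mpr h
  exact isUnit_toMatrixRight'_iff.mp (isUnit_of_isUnit_map_constantCoeff h')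

end Matrix

variable {R : Type*} [Ring R] {k : Type*} [Fintype k] [DecidableEq k]

theorem nonempty_range_equiv_of_mapPi_constantCoeff_eq {e f : Module.End R⟦X⟧ (k → R⟦X⟧)}
    (he : IsIdempotentElem e) (hf : IsIdempotentElem f)
    (h : Module.End.mapPi constantCoeff f = Module.End.mapPi constantCoeff e) :
    Nonempty (range e ≃ₗ[R⟦X⟧] range f) :=
  nonempty_range_equiv_of_mul_eq
    (isUnit_of_isUnit_mapPi_constantCoeff (by rw [he.map_conjugator _ h]; exact isUnit_one))
    (he.conjugator_mul hf)

theorem nonempty_range_equiv_pi_of_mapPi_constantCoeff {e : Module.End R⟦X⟧ (k → R⟦X⟧)}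
    (he : IsIdempotentElem e) {m : Type*} [Fintype m] [DecidableEq m]
    (γ : range (Module.End.mapPi constantCoeff e) ≃ₗ[R] (m → R)) :
    Nonempty (range e ≃ₗ[R⟦X⟧] (m → R⟦X⟧)) := by
  obtain ⟨a, b, hba, hab⟩ := exists_comp_eq_id_of_isIdempotentElem (he.map _) γ
  have hBA : b.mapPi C ∘ₗ a.mapPi C = LinearMap.id := by rw [← mapPi_comp, hba, mapPi_id]
  have hred : (a.mapPi C ∘ₗ b.mapPi C).mapPi constantCoeff = e.mapPi constantCoeff := by
    rw [← mapPi_comp, mapPi_mapPi, constantCoeff_comp_C, mapPi_ringHom_id]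
    exact hab
  obtain ⟨ψ⟩ := nonempty_range_equiv_of_mapPi_constantCoeff_eq he
    (isIdempotentElem_comp_of_comp_eq_id hBA) hred
  exact ⟨ψ.trans (rangeCompEquivOfCompEqId hBA)⟩

end PowerSeries

theorem TwoProjectiveFree.eq_of_linearEquiv {R : Type u} [Ring R] (hR : TwoProjectiveFree R)
    {m n : ℕ} (hm : m ≤ 2) (hn : n ≤ 2) (γ : (Fin m → R) ≃ₗ[R] (Fin n → R)) : m = n :=
  (hR _ inferInstance (exists_span_range_eq_top_of_surjective
      (funLeft_surjective_of_injective R R _ (Fin.castLE_injective hm)))).unique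
    ⟨hm, ⟨.refl R _⟩⟩ ⟨hn, ⟨γ⟩⟩

theorem twoProjectiveFree_powerSeries {R : Type u} [Ring R]
    (hR : TwoProjectiveFree R) : TwoProjectiveFree (PowerSeries R) := by
  intro M _ _ _ ⟨s, hs⟩
  obtain ⟨e, he, ⟨eM⟩⟩ := Module.Projective.exists_isIdempotentElem_nonempty_equiv_range hs
  have he₀ := he.map (Module.End.mapPi constantCoeff)
  obtain ⟨n, ⟨hn, ⟨γ₀⟩⟩, -⟩ := hR _ (projective_range_of_isIdempotentElem he₀)
    (exists_span_range_eq_top_of_surjective (surjective_rangeRestrict _))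
  obtain ⟨γ⟩ := nonempty_range_equiv_pi_of_mapPi_constantCoeff he γ₀
  refine ⟨n, ⟨hn, ⟨eM.trans γ⟩⟩, fun m ⟨hm, ⟨δ⟩⟩ => ?_⟩
  exact hR.eq_of_linearEquiv hm hn ((δ.symm.trans (eM.trans γ)).mapPi constantCoeff)
end

section
/- Let R be a ring and let I be a two-sided ideal of R with I ⊆ J(R). If the quotient ring R/I is 2-projective-free, then R is 2-projective-free. -/
universe u

/-!
Write `S = R/I`. For a 2-generated projective `R`-module `M`, the reduction `M/IM` is a
2-generated projective `S`-module, hence `M/IM ≅ Sⁿ`. Lifting the standard basis of `Sⁿ` to `M`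
gives `φ : Rⁿ → M` which is an isomorphism modulo `I`. Since `I ⊆ J(R)`, Nakayama's lemma makes
`φ` surjective; its kernel is then a direct summand of `Rⁿ`, so finitely generated, and it lies
in `I·Rⁿ`. Projecting onto it gives `ker φ ⊆ I · ker φ`, so it vanishes by Nakayama again.
Uniqueness of `n` comes from `S`: an isomorphism `M ≅ Rᵐ` reduces to `M/IM ≅ Sᵐ`.
-/

section Nakayama

open Submodule

variable {R M P : Type*} [Ring R] [AddCommGroup M] [Module R M] [AddCommGroup P] [Module R P]
  {J : Ideal R}

theorem Submodule.eq_top_of_sup_smul_top_eq_top [Module.Finite R M] (hJ : J ≤ Ring.jacobson R)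
    {N : Submodule R M} (h : N ⊔ J • ⊤ = ⊤) : N = ⊤ := by
  have hfg : (⊤ : Submodule R (M ⧸ N)).FG := Module.finite_def.mp inferInstance
  have hle : (⊤ : Submodule R (M ⧸ N)) ≤ Ring.jacobson R • ⊤ :=
    calc (⊤ : Submodule R (M ⧸ N)) = map N.mkQ (N ⊔ J • ⊤) := by
          rw [h, map_top, range_mkQ]
      _ = J • ⊤ := by rw [map_sup, map_smul'', map_top, range_mkQ, mkQ_map_self, bot_sup_eq]
      _ ≤ Ring.jacobson R • ⊤ := smul_mono_left hJ
  rw [← Quotient.subsingleton_iff, ← Submodule.subsingleton_iff R, ← subsingleton_iff_bot_eq_top]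
  exact (hfg.eq_bot_of_le_jacobson_smul hle).symm

theorem LinearMap.ker_eq_bot_of_ker_le_smul_top [Module.Finite R P] [Module.Projective R M]
    (hJ : J ≤ Ring.jacobson R) {f : P →ₗ[R] M} (hf : Function.Surjective f)
    (hker : ker f ≤ J • ⊤) : ker f = ⊥ := by
  obtain ⟨g, hg⟩ := Module.projective_lifting_property f LinearMap.id hf
  set p := LinearMap.id - g ∘ₗ f
  have hkp : ker f = range p := ker_eq_range_of_comp_eq_id hg
  have hfg : (ker f).FG := by
    rw [hkp, range_eq_map]
    exact Module.Finite.fg_top.map p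
  refine hfg.eq_bot_of_le_jacobson_smul fun v hv ↦ ?_
  have hpv : p v = v := by simp [p, mem_ker.mp hv]
  have hpJ : p v ∈ J • ker f := by
    rw [hkp, range_eq_map, ← map_smul'']
    exact mem_map_of_mem (hker hv)
  exact smul_mono_left hJ (hpv ▸ hpJ)

end Nakayama

namespace TwoSidedIdeal

variable {R : Type*} [Ring R] (I : TwoSidedIdeal R)

instance : RingHomSurjective I.ringCon.mk' := ⟨I.ringCon.mk'_surjective⟩

theorem ringCon_mk'_eq_zero_iff {r : R} : I.ringCon.mk' r = 0 ↔ r ∈ I := by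
  rw [← map_zero I.ringCon.mk', I.mem_iff]
  exact RingCon.eq _

def mkPi (ι : Type*) : (ι → R) →ₛₗ[I.ringCon.mk'] (ι → I.ringCon.Quotient) where
  toFun v i := I.ringCon.mk' (v i)
  map_add' _ _ := funext fun _ ↦ map_add _ _ _
  map_smul' _ _ := funext fun _ ↦ map_mul _ _ _

theorem mkPi_surjective (ι : Type*) : Function.Surjective (I.mkPi ι) :=
  I.ringCon.mk'_surjective.comp_left

theorem ker_mkPi_le (ι : Type*) [Finite ι] : LinearMap.ker (I.mkPi ι) ≤ I.asIdeal • ⊤ := by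
  classical
  cases nonempty_fintype ι
  intro v hv
  have hvI (i : ι) : v i ∈ I.asIdeal :=
    I.ringCon_mk'_eq_zero_iff.mp (congr_fun (LinearMap.mem_ker.mp hv) i)
  rw [pi_eq_sum_univ' v]
  exact Submodule.sum_mem _ fun i _ ↦ Submodule.smul_mem_smul (hvI i) Submodule.mem_top

variable (M : Type*) [AddCommGroup M] [Module R M]

abbrev QuotSMulTop : Type _ := M ⧸ I.asIdeal • (⊤ : Submodule R M)

-- Scalars act through `R ⧸ I.asIdeal`, so that `I.ringCon.mk' r • x = r • x` holds by `rfl`.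
instance : Module I.ringCon.Quotient (I.QuotSMulTop M) :=
  Module.compHom _ (I.ringCon.lift (Ideal.Quotient.mk I.asIdeal) fun x y h ↦
    Ideal.Quotient.eq.mpr ((I.rel_iff x y).mp h))

namespace QuotSMulTop

variable {M}

def mk : M →ₛₗ[I.ringCon.mk'] I.QuotSMulTop M where
  toFun := Submodule.Quotient.mk
  map_add' _ _ := rfl
  map_smul' _ _ := rfl

theorem mk_surjective : Function.Surjective (mk I (M := M)) :=
  Submodule.Quotient.mk_surjective _

@[simp]
theorem ker_mk : LinearMap.ker (mk I (M := M)) = I.asIdeal • ⊤ :=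
  Submodule.ker_mkQ _

variable {I} {P : Type*} [AddCommGroup P] [Module I.ringCon.Quotient P]

def lift (g : M →ₛₗ[I.ringCon.mk'] P) : I.QuotSMulTop M →ₗ[I.ringCon.Quotient] P where
  toFun := (I.asIdeal • ⊤ : Submodule R M).liftQ g <| Submodule.smul_le.mpr fun r hr m _ ↦ by
    rw [LinearMap.mem_ker, map_smulₛₗ, I.ringCon_mk'_eq_zero_iff.mpr hr, zero_smul]
  map_add' := map_add _
  map_smul' s x := by
    obtain ⟨r, rfl⟩ := I.ringCon.mk'_surjective s
    exact map_smulₛₗ _ r x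

@[simp]
theorem lift_mk (g : M →ₛₗ[I.ringCon.mk'] P) (m : M) : lift g (mk I m) = g m := rfl

theorem lift_bijective {g : M →ₛₗ[I.ringCon.mk'] P} (hg : Function.Surjective g)
    (hker : LinearMap.ker g ≤ I.asIdeal • ⊤) : Function.Bijective (lift g) := by
  refine ⟨?_, fun p ↦ ?_⟩
  · rw [← LinearMap.ker_eq_bot, eq_bot_iff]
    intro x hx
    obtain ⟨m, rfl⟩ := mk_surjective I x
    rw [Submodule.mem_bot, ← LinearMap.mem_ker, ker_mk]
    exact hker hx
  · obtain ⟨m, rfl⟩ := hg p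
    exact ⟨mk I m, rfl⟩

theorem linearCombination_mapRange_mk (c : M →₀ R) :
    Finsupp.linearCombination I.ringCon.Quotient (mk I)
      (Finsupp.mapRange.linearMap I.ringCon.mk'.toSemilinearMap c) =
      mk I (Finsupp.linearCombination R id c) := by
  induction c using Finsupp.induction_linear with
  | zero => simp
  | add c d hc hd => rw [map_add, map_add, hc, hd, map_add, map_add]
  | single m r => simp

instance [Module.Projective R M] : Module.Projective I.ringCon.Quotient (I.QuotSMulTop M) := by
  obtain ⟨s, hs⟩ := Module.Projective.out (R := R) (P := M)
  refine Module.Projective.of_split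
    (lift (Finsupp.mapRange.linearMap I.ringCon.mk'.toSemilinearMap ∘ₛₗ s))
    (Finsupp.linearCombination I.ringCon.Quotient (mk I)) (LinearMap.ext fun x ↦ ?_)
  obtain ⟨m, rfl⟩ := mk_surjective I x
  rw [LinearMap.comp_apply, lift_mk, LinearMap.id_apply]
  conv_rhs => rw [← hs m]
  exact linearCombination_mapRange_mk (s m)

theorem span_range_mk {ι : Type*} {s : ι → M} (hs : Submodule.span R (Set.range s) = ⊤) :
    Submodule.span I.ringCon.Quotient (Set.range (mk I ∘ s)) = ⊤ := by
  rw [Set.range_comp, ← Submodule.map_span, hs, Submodule.map_top,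
    LinearMap.range_eq_top.mpr (mk_surjective I)]

noncomputable def equivPi {ι : Type*} [Finite ι] (e : M ≃ₗ[R] (ι → R)) :
    I.QuotSMulTop M ≃ₗ[I.ringCon.Quotient] (ι → I.ringCon.Quotient) :=
  .ofBijective (lift (I.mkPi ι ∘ₛₗ e.toLinearMap)) <|
    lift_bijective ((I.mkPi_surjective ι).comp e.surjective) fun x hx ↦ by
      rw [← e.symm_apply_apply x]
      exact Submodule.smul_top_le_comap_smul_top _ e.symm.toLinearMap (I.ker_mkPi_le ι hx)

theorem exists_comp_eq_mkPi {ι : Type*} [Finite ι]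
    {g : M →ₛₗ[I.ringCon.mk'] (ι → I.ringCon.Quotient)} (hg : Function.Surjective g) :
    ∃ φ : (ι → R) →ₗ[R] M, g ∘ₛₗ φ = I.mkPi ι := by
  classical
  cases nonempty_fintype ι
  choose b hb using fun i ↦ hg (Pi.single i 1)
  refine ⟨Fintype.linearCombination R b, LinearMap.ext fun v ↦ ?_⟩
  simp only [LinearMap.comp_apply, Fintype.linearCombination_apply, map_sum, map_smulₛₗ, hb]
  exact (pi_eq_sum_univ' (I.mkPi ι v)).symm

theorem nonempty_linearEquiv_pi_of_le_jacobson (hI : I.asIdeal ≤ Ring.jacobson R)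
    [Module.Finite R M] [Module.Projective R M] {ι : Type*} [Finite ι]
    (ε : I.QuotSMulTop M ≃ₗ[I.ringCon.Quotient] (ι → I.ringCon.Quotient)) :
    Nonempty (M ≃ₗ[R] (ι → R)) := by
  set g := ε.toLinearMap ∘ₛₗ mk I
  have hg : LinearMap.ker g = I.asIdeal • ⊤ := by simp [g, LinearEquiv.ker_comp]
  obtain ⟨φ, hφ⟩ := exists_comp_eq_mkPi (g := g) (ε.surjective.comp (mk_surjective I))
  have hrange : LinearMap.range φ ⊔ I.asIdeal • ⊤ = ⊤ := by
    refine eq_top_iff.mpr fun m _ ↦ ?_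
    obtain ⟨v, hv⟩ := I.mkPi_surjective ι (g m)
    have hmv : m - φ v ∈ LinearMap.ker g := by
      rw [LinearMap.mem_ker, map_sub, ← LinearMap.comp_apply, hφ, hv, sub_self]
    exact Submodule.mem_sup.mpr ⟨φ v, LinearMap.mem_range_self φ v, m - φ v, hg ▸ hmv, by abel⟩
  have hsurj : Function.Surjective φ :=
    LinearMap.range_eq_top.mp (Submodule.eq_top_of_sup_smul_top_eq_top hI hrange)
  have hker : LinearMap.ker φ ≤ I.asIdeal • ⊤ := fun v hv ↦ I.ker_mkPi_le ι <| by
    rw [LinearMap.mem_ker, ← hφ, LinearMap.comp_apply, LinearMap.mem_ker.mp hv, map_zero]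
  have hinj : Function.Injective φ :=
    LinearMap.ker_eq_bot.mp (LinearMap.ker_eq_bot_of_ker_le_smul_top hI hsurj hker)
  exact ⟨(LinearEquiv.ofBijective φ ⟨hinj, hsurj⟩).symm⟩

end QuotSMulTop

end TwoSidedIdeal

theorem twoProjectiveFree_of_quotient {R : Type u} [Ring R] (I : TwoSidedIdeal R)
    (hI : ∀ x ∈ I, x ∈ (⊥ : Ideal R).jacobson)
    (hq : TwoProjectiveFree I.ringCon.Quotient) : TwoProjectiveFree R := by
  intro M _ _ _ ⟨s, hs⟩
  have hJ : I.asIdeal ≤ Ring.jacobson R := fun x hx ↦ Ideal.jacobson_bot (R := R) ▸ hI x hx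
  have : Module.Finite R M := ⟨⟨(Set.finite_range s).toFinset, by simpa using hs⟩⟩
  obtain ⟨n, ⟨hn, ⟨ε⟩⟩, huniq⟩ :=
    hq (I.QuotSMulTop M) inferInstance ⟨_, TwoSidedIdeal.QuotSMulTop.span_range_mk hs⟩
  refine ⟨n, ⟨hn, TwoSidedIdeal.QuotSMulTop.nonempty_linearEquiv_pi_of_le_jacobson hJ ε⟩, ?_⟩
  rintro m ⟨hm, ⟨e⟩⟩
  exact huniq m ⟨hm, ⟨TwoSidedIdeal.QuotSMulTop.equivPi e⟩⟩
end

section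
/- Let R be a commutative 2-projective-free ring and A ∈ M₂(R). Then A is strongly J-clean if and only if (1) A ∈ J(M₂(R)), or (2) I₂ − A ∈ J(M₂(R)), or (3) A is cyclic and the equation x² − tr(A)x + det(A) = 0 has a root in J(R) and a root in 1 + J(R). -/
universe u

/-- A matrix `A ∈ M₂(R)` is cyclic if there is a column `α` such that the matrix with
columns `α` and `Aα` is invertible. -/
def IsCyclicMat {R : Type u} [Ring R] (A : Matrix (Fin 2) (Fin 2) R) : Prop :=
  ∃ α : Fin 2 → R, IsUnit (Matrix.of ![α, A.mulVec α]).transpose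

/-!
Write `J = J(R)`. If `A - E ∈ J(M₂(R))` with `E` an idempotent commuting with `A`, the ranges of
`E` and `1 - E` are 2-generated projective modules, hence free of rank 0, 1 or 2. Rank 0 or 2
forces `E = 0` or `E = 1`. Otherwise the ranges are `R u` and `R v`, the matrix `U = [v u]` is
invertible with `U⁻¹ E U = diag(0, 1)`, and `U⁻¹ A U`, which commutes with `diag(0, 1)`, is
`diag(a, b)` with `a ∈ J` and `b ∈ 1 + J`. These are the roots asked for, and `A` is cyclic since
`b - a` is a unit.

Conversely, roots `a ∈ J` and `b ∈ 1 + J` of `x² - tr(A) x + det(A)` make `b - a` a unit, so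
`tr A = a + b`, `det A = a b`, and by Cayley–Hamilton `(A - a)(A - b) = 0`. Then
`e = (A - a) / (b - a)` is an idempotent commuting with `A`, and
`A - e = ((b - a - 1) A + a) / (b - a)` lies in `J(M₂(R))`.
-/

open Matrix Polynomial LinearMap

namespace Matrix

variable {R n : Type*} [Fintype n] [DecidableEq n]

theorem mem_jacobson_bot_iff [Ring R] {B : Matrix n n R} :
    B ∈ (⊥ : Ideal (Matrix n n R)).jacobson ↔ ∀ i j, B i j ∈ (⊥ : Ideal R).jacobson := by
  rw [← TwoSidedIdeal.bot_asIdeal, ← TwoSidedIdeal.asIdeal_jacobson, TwoSidedIdeal.mem_asIdeal,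
    ← TwoSidedIdeal.matrix_jacobson_bot, TwoSidedIdeal.mem_matrix]
  simp only [← TwoSidedIdeal.mem_asIdeal, TwoSidedIdeal.asIdeal_jacobson,
    TwoSidedIdeal.bot_asIdeal]

theorem exists_eq_diagonal_of_commute [Ring R] {B : Matrix (Fin 2) (Fin 2) R}
    (hBD : B * diagonal ![0, 1] = diagonal ![0, 1] * B)
    (hBJ : B - diagonal ![0, 1] ∈ (⊥ : Ideal (Matrix (Fin 2) (Fin 2) R)).jacobson) :
    ∃ a ∈ (⊥ : Ideal R).jacobson, ∃ b, b - 1 ∈ (⊥ : Ideal R).jacobson ∧ B = diagonal ![a, b] := by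
  have h01 : B 0 1 = 0 := by simpa using congrFun (congrFun hBD 0) 1
  have h10 : B 1 0 = 0 := by simpa using (congrFun (congrFun hBD 1) 0).symm
  rw [mem_jacobson_bot_iff] at hBJ
  refine ⟨B 0 0, by simpa using hBJ 0 0, B 1 1, by simpa using hBJ 1 1, ?_⟩
  ext i j
  fin_cases i <;> fin_cases j <;> simp [h01, h10]

theorem algebraMap_mem_jacobson_bot [CommRing R] {a : R} (ha : a ∈ (⊥ : Ideal R).jacobson) :
    algebraMap R (Matrix n n R) a ∈ (⊥ : Ideal (Matrix n n R)).jacobson := by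
  rw [mem_jacobson_bot_iff]
  intro i j
  rw [algebraMap_matrix_apply]
  split_ifs
  · exact ha
  · exact zero_mem _

theorem aeval_self_fin_two [CommRing R] (A : Matrix (Fin 2) (Fin 2) R) :
    aeval A (X ^ 2 - C A.trace * X + C A.det) = 0 := by
  ext i j
  fin_cases i <;> fin_cases j <;>
    simp [sq, mul_apply, trace_fin_two, det_fin_two, algebraMap_matrix_apply] <;> ring

end Matrix

theorem isUnit_sub_of_mem_jacobson_bot {R : Type*} [CommRing R] {a b : R}
    (ha : a ∈ (⊥ : Ideal R).jacobson) (hb : b - 1 ∈ (⊥ : Ideal R).jacobson) : IsUnit (b - a) :=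
  Ideal.isUnit_of_sub_one_mem_jacobson_bot _ (by simpa [sub_right_comm] using sub_mem hb ha)

theorem eq_add_and_eq_mul_of_roots {R : Type*} [CommRing R] {t d a b : R}
    (ha : a ^ 2 - t * a + d = 0) (hb : b ^ 2 - t * b + d = 0) (hab : IsUnit (b - a)) :
    t = a + b ∧ d = a * b := by
  have ht : t = a + b := by
    refine (hab.mul_left_cancel ?_).symm
    linear_combination hb - ha
  exact ⟨ht, by linear_combination ha + a * ht⟩

theorem isStronglyJClean_of_aeval_eq_zero {R S : Type*} [CommRing R] [Ring S] [Algebra R S]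
    {x : S} {a b : R} (hx : aeval x ((X - C a) * (X - C b)) = 0) (hab : IsUnit (b - a))
    (ha : algebraMap R S a ∈ (⊥ : Ideal S).jacobson)
    (hb : algebraMap R S (b - 1) ∈ (⊥ : Ideal S).jacobson) : IsStronglyJClean x := by
  obtain ⟨w, hw⟩ := hab.exists_left_inv
  have hwC : C w * (C b - C a) = (1 : R[X]) := by rw [← C_sub, ← C_mul, hw, C_1]
  set p : R[X] := C w * (X - C a)
  refine ⟨aeval x p, ?_, ?_, ?_⟩
  · have hp : p * p = p + C w ^ 2 * ((X - C a) * (X - C b)) := by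
      linear_combination (C w * (X - C a)) * hwC
    rw [IsIdempotentElem, ← map_mul, hp, map_add, map_mul (aeval x) (C w ^ 2), hx, mul_zero,
      add_zero]
  · have hp : X - p = C w * (C (b - 1) - C a) * X + C w * C a := by
      rw [C_sub, C_1]; linear_combination (-X) * hwC
    rw [show x - aeval x p = aeval x (X - p) by rw [map_sub, aeval_X], hp]
    simp only [map_add, map_mul, map_sub (aeval (R := R) x), aeval_C, aeval_X]
    exact add_mem (Ideal.mul_mem_right _ _ (Ideal.mul_mem_left _ _ (sub_mem hb ha)))
      (Ideal.mul_mem_left _ _ ha)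
  · simpa using ((Commute.all X p).map (aeval x)).eq

theorem Matrix.isStronglyJClean_of_roots {R : Type*} [CommRing R]
    {A : Matrix (Fin 2) (Fin 2) R} {a b : R} (ha : a ∈ (⊥ : Ideal R).jacobson)
    (hb : b - 1 ∈ (⊥ : Ideal R).jacobson)
    (hra : a ^ 2 - A.trace * a + A.det = 0) (hrb : b ^ 2 - A.trace * b + A.det = 0) :
    IsStronglyJClean A := by
  have hab := isUnit_sub_of_mem_jacobson_bot ha hb
  obtain ⟨htr, hdet⟩ := eq_add_and_eq_mul_of_roots hra hrb hab
  refine isStronglyJClean_of_aeval_eq_zero ?_ hab (algebraMap_mem_jacobson_bot ha)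
    (algebraMap_mem_jacobson_bot hb)
  rw [← aeval_self_fin_two A, htr, hdet]
  congr 1
  simp only [C_add, C_mul]
  ring

namespace LinearMap

section Ring

variable {R M N : Type*} [Ring R] [AddCommGroup M] [Module R M] [AddCommGroup N] [Module R N]

theorem IsIdempotentElem.projective_range [Module.Projective R M] {f : Module.End R M}
    (hf : IsIdempotentElem f) : Module.Projective R (range f) :=
  .of_split (range f).subtype f.rangeRestrict <| by
    ext ⟨x, hx⟩
    simpa using hf.mem_range_iff.mp hx

theorem span_range_rangeRestrict_comp {ι : Type*} {v : ι → M}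
    (hv : Submodule.span R (Set.range v) = ⊤) (f : M →ₗ[R] N) :
    Submodule.span R (Set.range (f.rangeRestrict ∘ v)) = ⊤ := by
  rw [Set.range_comp, Submodule.span_image, hv, Submodule.map_top, range_rangeRestrict]

theorem eq_zero_of_range_equiv_fin_zero {f : M →ₗ[R] N} (φ : range f ≃ₗ[R] (Fin 0 → R)) :
    f = 0 := by
  have : Subsingleton (range f) := φ.toEquiv.subsingleton
  ext x
  exact congrArg Subtype.val (Subsingleton.elim (f.rangeRestrict x) 0)

end Ring

theorem IsIdempotentElem.eq_one_of_range_equiv {R M : Type*} [CommRing R] [AddCommGroup M]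
    [Module R M] [Module.Finite R M] {f : Module.End R M} (hf : IsIdempotentElem f)
    (φ : range f ≃ₗ[R] M) : f = 1 := by
  have hinj : Function.Injective f.rangeRestrict := by
    have := OrzechProperty.injective_of_surjective_endomorphism (φ.toLinearMap ∘ₗ f.rangeRestrict)
      (φ.surjective.comp f.surjective_rangeRestrict)
    exact Function.Injective.of_comp (f := φ) (by simpa using this)
  ext x
  exact hinj (Subtype.ext (LinearMap.congr_fun hf x))

end LinearMap

theorem Submodule.eq_span_singleton_of_equiv_fin_one {R M : Type*} [Ring R] [AddCommGroup M]
    [Module R M] {p : Submodule R M} (φ : p ≃ₗ[R] (Fin 1 → R)) : p = R ∙ (φ.symm 1 : M) := by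
  refine le_antisymm (fun x hx => mem_span_singleton.mpr ⟨φ ⟨x, hx⟩ 0, ?_⟩) ?_
  · have : φ ⟨x, hx⟩ = φ ⟨x, hx⟩ 0 • 1 := by ext i; fin_cases i; simp
    rw [← coe_smul, ← map_smul, ← this, LinearEquiv.symm_apply_apply]
  · exact (span_singleton_le_iff_mem _ _).mpr (φ.symm 1).2

namespace Matrix

variable {R : Type*} [CommRing R]

theorem exists_isUnit_mul_diagonal_of_range_eq_span {E : Matrix (Fin 2) (Fin 2) R}
    (hE : IsIdempotentElem E) {u v : Fin 2 → R} (hu : range (toLin' E) = R ∙ u)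
    (hv : range (toLin' (1 - E)) = R ∙ v) :
    ∃ U : Matrix (Fin 2) (Fin 2) R, IsUnit U ∧ E * U = U * diagonal ![0, 1] := by
  have hEu : E *ᵥ u = u :=
    (hE.map toLinAlgEquiv').mem_range_iff.mp (hu ▸ Submodule.mem_span_singleton_self u)
  have hEv : E *ᵥ v = 0 := by
    have : (1 - E) *ᵥ v = v :=
      (hE.one_sub.map toLinAlgEquiv').mem_range_iff.mp (hv ▸ Submodule.mem_span_singleton_self v)
    rwa [sub_mulVec, one_mulVec, sub_eq_self] at this
  have hU : IsUnit (of ![v, u])ᵀ := by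
    rw [← mulVec_surjective_iff_isUnit]
    intro x
    obtain ⟨c, hc⟩ := Submodule.mem_span_singleton.mp (hu ▸ mem_range_self (toLin' E) x)
    obtain ⟨d, hd⟩ := Submodule.mem_span_singleton.mp (hv ▸ mem_range_self (toLin' (1 - E)) x)
    refine ⟨![d, c], ?_⟩
    calc (of ![v, u])ᵀ *ᵥ ![d, c] = E *ᵥ x + (1 - E) *ᵥ x := by
          simp only [toLin'_apply] at hc hd
          rw [← hc, ← hd]
          ext i; simp [mulVec, dotProduct, Fin.sum_univ_two, mul_comm, add_comm]
      _ = x := by rw [← add_mulVec, add_sub_cancel, one_mulVec]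
  refine ⟨_, hU, ?_⟩
  ext i j
  fin_cases j
  · calc (E * (of ![v, u])ᵀ) i 0 = (E *ᵥ v) i := rfl
      _ = _ := by simp [hEv]
  · calc (E * (of ![v, u])ᵀ) i 1 = (E *ᵥ u) i := rfl
      _ = _ := by simp [hEu]

theorem _root_.IsCyclicMat.conj {A U : Matrix (Fin 2) (Fin 2) R} (hA : IsCyclicMat A)
    (hU : IsUnit U) : IsCyclicMat (U * A * U⁻¹) := by
  obtain ⟨α, hα⟩ := hA
  refine ⟨U *ᵥ α, ?_⟩
  have hUα : (U * A * U⁻¹) *ᵥ (U *ᵥ α) = U *ᵥ (A *ᵥ α) := by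
    rw [mulVec_mulVec, nonsing_inv_mul_cancel_right U _ ((isUnit_iff_isUnit_det U).mp hU),
      mulVec_mulVec]
  have hcols : (of ![U *ᵥ α, U *ᵥ (A *ᵥ α)])ᵀ = U * (of ![α, A *ᵥ α])ᵀ := by
    ext i j; fin_cases j <;> rfl
  rw [hUα, hcols]
  exact hU.mul hα

theorem isCyclicMat_diagonal {a b : R} (hab : IsUnit (b - a)) : IsCyclicMat (diagonal ![a, b]) :=
  ⟨![1, 1], by simpa [isUnit_iff_isUnit_det, det_fin_two] using hab⟩

theorem isCyclicMat_and_roots_of_commute {A E U : Matrix (Fin 2) (Fin 2) R} (hU : IsUnit U)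
    (hEU : E * U = U * diagonal ![0, 1])
    (hAE : A - E ∈ (⊥ : Ideal (Matrix (Fin 2) (Fin 2) R)).jacobson) (hcomm : A * E = E * A) :
    IsCyclicMat A ∧
      (∃ a ∈ (⊥ : Ideal R).jacobson, a ^ 2 - A.trace * a + A.det = 0) ∧
      (∃ b : R, b - 1 ∈ (⊥ : Ideal R).jacobson ∧ b ^ 2 - A.trace * b + A.det = 0) := by
  have hUdet := (isUnit_iff_isUnit_det U).mp hU
  set B := U⁻¹ * A * U
  have hD : diagonal ![0, 1] = U⁻¹ * E * U := by
    rw [mul_assoc, hEU, nonsing_inv_mul_cancel_left U _ hUdet]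
  have hA : A = U * B * U⁻¹ := by
    simp only [B, mul_assoc, mul_nonsing_inv_cancel_left U _ hUdet, mul_nonsing_inv U hUdet,
      mul_one]
  have hBD : B * diagonal ![0, 1] = diagonal ![0, 1] * B := by
    simp only [hD, B, mul_assoc, mul_nonsing_inv_cancel_left U _ hUdet]
    rw [← mul_assoc A, hcomm, mul_assoc]
  have hBJ : B - diagonal ![0, 1] ∈ (⊥ : Ideal (Matrix (Fin 2) (Fin 2) R)).jacobson := by
    rw [hD, ← sub_mul, ← mul_sub]
    exact Ideal.mul_mem_right _ _ (Ideal.mul_mem_left _ _ hAE)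
  obtain ⟨a, ha, b, hb, hBab⟩ := exists_eq_diagonal_of_commute hBD hBJ
  have htr : A.trace = a + b := by rw [hA, trace_conj hU, hBab, trace_fin_two]; simp
  have hdet : A.det = a * b := by rw [hA, det_conj hU, hBab, det_fin_two]; simp
  refine ⟨?_, ⟨a, ha, by rw [htr, hdet]; ring⟩, ⟨b, hb, by rw [htr, hdet]; ring⟩⟩
  rw [hA, hBab]
  exact (isCyclicMat_diagonal (isUnit_sub_of_mem_jacobson_bot ha hb)).conj hU

end Matrix

namespace TwoProjectiveFree

variable {R : Type u} [CommRing R]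

theorem exists_equiv_range (hR : TwoProjectiveFree R) {f : Module.End R (Fin 2 → R)}
    (hf : IsIdempotentElem f) : ∃ n ≤ 2, Nonempty (range f ≃ₗ[R] (Fin n → R)) := by
  obtain ⟨n, hn, -⟩ := hR (range f) hf.projective_range
    ⟨_, span_range_rangeRestrict_comp (Pi.basisFun R (Fin 2)).span_eq f⟩
  exact ⟨n, hn⟩

theorem eq_zero_or_eq_one_or_range_eq_span_singleton (hR : TwoProjectiveFree R)
    {f : Module.End R (Fin 2 → R)} (hf : IsIdempotentElem f) :
    f = 0 ∨ f = 1 ∨ ∃ u, range f = R ∙ u := by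
  obtain ⟨n, hn, ⟨φ⟩⟩ := hR.exists_equiv_range hf
  interval_cases n
  · exact .inl (eq_zero_of_range_equiv_fin_zero φ)
  · exact .inr (.inr ⟨_, Submodule.eq_span_singleton_of_equiv_fin_one φ⟩)
  · exact .inr (.inl (hf.eq_one_of_range_equiv φ))

theorem exists_isUnit_mul_diagonal (hR : TwoProjectiveFree R) {E : Matrix (Fin 2) (Fin 2) R}
    (hE : IsIdempotentElem E) :
    E = 0 ∨ E = 1 ∨ ∃ U, IsUnit U ∧ E * U = U * diagonal ![0, 1] := by
  rcases hR.eq_zero_or_eq_one_or_range_eq_span_singleton (hE.map toLinAlgEquiv') with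
    hE0 | hE1 | ⟨u, hu⟩
  · exact .inl ((map_eq_zero_iff _ toLinAlgEquiv'.injective).mp hE0)
  · exact .inr (.inl ((map_eq_one_iff _ toLinAlgEquiv'.injective).mp hE1))
  rcases hR.eq_zero_or_eq_one_or_range_eq_span_singleton (hE.one_sub.map toLinAlgEquiv') with
    hF0 | hF1 | ⟨v, hv⟩
  · exact .inr (.inl (sub_eq_zero.mp ((map_eq_zero_iff _ toLinAlgEquiv'.injective).mp hF0)).symm)
  · exact .inl (sub_eq_self.mp ((map_eq_one_iff _ toLinAlgEquiv'.injective).mp hF1))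
  · exact .inr (.inr (exists_isUnit_mul_diagonal_of_range_eq_span hE hu hv))

end TwoProjectiveFree

theorem stronglyJClean_iff_cyclic_of_comm {R : Type u} [CommRing R]
    (hR : TwoProjectiveFree R) (A : Matrix (Fin 2) (Fin 2) R) :
    IsStronglyJClean A ↔
      A ∈ (⊥ : Ideal (Matrix (Fin 2) (Fin 2) R)).jacobson ∨
      1 - A ∈ (⊥ : Ideal (Matrix (Fin 2) (Fin 2) R)).jacobson ∨
      (IsCyclicMat A ∧
        (∃ a ∈ (⊥ : Ideal R).jacobson, a ^ 2 - Matrix.trace A * a + A.det = 0) ∧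
        (∃ b : R, b - 1 ∈ (⊥ : Ideal R).jacobson ∧ b ^ 2 - Matrix.trace A * b + A.det = 0)) := by
  constructor
  · rintro ⟨E, hE, hAE, hcomm⟩
    rcases hR.exists_isUnit_mul_diagonal hE with rfl | rfl | ⟨U, hU, hEU⟩
    · exact .inl (by simpa using hAE)
    · exact .inr (.inl (by simpa using neg_mem hAE))
    · exact .inr (.inr (isCyclicMat_and_roots_of_commute hU hEU hAE hcomm))
  · rintro (hA | hA | ⟨-, ⟨a, ha, hra⟩, ⟨b, hb, hrb⟩⟩)
    · exact ⟨0, .zero, by simpa using hA, by simp⟩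
    · exact ⟨1, .one, by simpa using neg_mem hA, by simp⟩
    · exact isStronglyJClean_of_roots ha hb hra hrb
end

section
/- Let R be an abelian ring (all idempotents of R are central) and let f(x) ∈ R[[x]]. If f(0) ∈ R is strongly J-clean, then f(x) ∈ R[[x]] is strongly J-clean. -/
/-!
If `f(0) - e ∈ J(R)` with `e` idempotent, the candidate idempotent for `f` is the constant
series `C e`. A series with zero constant term lies in `J(R⟦X⟧)`, since `1 + g φ` then has
constant term `1` and is invertible; hence `J(R⟦X⟧)` is the preimage of `J(R)` under `f ↦ f(0)`,
and `f - C e ∈ J(R⟦X⟧)`. Finally `C e` commutes with `f` because `e` is central in `R`.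
-/

universe u

theorem Ideal.mem_jacobson_bot_of_forall_isUnit_mul_add_one {R : Type*} [Ring R] {x : R}
    (h : ∀ y, IsUnit (y * x + 1)) : x ∈ (⊥ : Ideal R).jacobson := by
  refine mem_jacobson_iff.2 fun y ↦ ⟨↑(h y).unit⁻¹, ?_⟩
  rw [mem_bot, sub_eq_zero, mul_assoc, ← mul_add_one, IsUnit.val_inv_mul]

theorem Ring.comap_jacobson_of_ker_le {R S : Type*} [Ring R] [Ring S] {f : R →+* S}
    (hf : Function.Surjective f) (hker : RingHom.ker f ≤ Ring.jacobson R) :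
    (Ring.jacobson S).comap f = Ring.jacobson R := by
  have : RingHomSurjective f := ⟨hf⟩
  exact Module.comap_jacobson_of_ker_le (f := f.toSemilinearMap) hf hker

namespace PowerSeries

variable {R : Type*} [Ring R]

theorem ker_constantCoeff_le_jacobson :
    RingHom.ker (constantCoeff (R := R)) ≤ Ring.jacobson R⟦X⟧ := by
  intro φ hφ
  rw [← Ideal.jacobson_bot]
  refine Ideal.mem_jacobson_bot_of_forall_isUnit_mul_add_one fun ψ ↦ ?_
  rw [isUnit_iff_constantCoeff, map_add, map_mul, RingHom.mem_ker.1 hφ, mul_zero, zero_add,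
    map_one]
  exact isUnit_one

theorem comap_constantCoeff_jacobson :
    (Ring.jacobson R).comap constantCoeff = Ring.jacobson R⟦X⟧ :=
  Ring.comap_jacobson_of_ker_le constantCoeff_surj ker_constantCoeff_le_jacobson

theorem mem_jacobson_iff_constantCoeff_mem {φ : R⟦X⟧} :
    φ ∈ (⊥ : Ideal R⟦X⟧).jacobson ↔ constantCoeff φ ∈ (⊥ : Ideal R).jacobson := by
  rw [Ideal.jacobson_bot, Ideal.jacobson_bot, ← comap_constantCoeff_jacobson]
  rfl

theorem commute_C {a : R} {φ : R⟦X⟧} (h : ∀ n, Commute a (coeff n φ)) : Commute (C a) φ := by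
  ext n
  rw [coeff_C_mul, coeff_mul_C]
  exact h n

end PowerSeries

open PowerSeries in
theorem stronglyJClean_powerSeries_of_abelian {R : Type u} [Ring R]
    (hab : ∀ e : R, IsIdempotentElem e → ∀ r : R, e * r = r * e)
    (f : PowerSeries R) (h : IsStronglyJClean (PowerSeries.constantCoeff f)) :
    IsStronglyJClean f := by
  obtain ⟨e, he, hfe, -⟩ := h
  refine ⟨C e, he.map C, ?_, ?_⟩
  · rwa [mem_jacobson_iff_constantCoeff_mem, map_sub, constantCoeff_C]
  · exact (commute_C fun n ↦ hab e he (coeff n f)).symm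
end

section
/- Let R be a PSF ring (a commutative ring in which every finitely generated projective module is stably free). Then A(x) ∈ M₂(R[[x]]) is strongly J-clean if and only if A(0) ∈ M₂(R) is strongly J-clean. -/
universe u

/-- A commutative ring is a PSF ring if every finitely generated projective module is
stably free. -/
def IsPSFRing (R : Type u) [CommRing R] : Prop :=
  ∀ (M : Type u) [AddCommGroup M] [Module R M], Module.Projective R M → Module.Finite R M →
    ∃ m n : ℕ, Nonempty ((M × (Fin m → R)) ≃ₗ[R] (Fin n → R))

/-!
Reduction modulo `X` preserves strong J-cleanness, because a matrix over `R⟦X⟧` lies in the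
Jacobson radical exactly when its constant term does.

Conversely, let `E` be an idempotent witnessing that `A(0)` is strongly J-clean. The idempotents
`det E` and `ε = tr E - 2 det E` of `R` cut out the loci where `E` has rank two and rank one.
Off the rank-one locus `E` is the scalar `det E`, which lifts to `R⟦X⟧` as it stands. On the
rank-one locus `A(0)` acts on the image of `1 - E` by a scalar `s ∈ J(R)`, a simple root of
its characteristic polynomial whose other root lies in `1 + J(R)`. Hensel's lemma in `R⟦X⟧`
lifts `s` to a root `α` of the characteristic polynomial of `A`, and `(A - α) / (tr A - 2α)` is
the required idempotent.
-/

open PowerSeries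

theorem Matrix.mem_jacobson_bot_iff_s19 {R : Type*} [Ring R] {n : Type*} [Fintype n]
    [DecidableEq n] {B : Matrix n n R} :
    B ∈ (⊥ : Ideal (Matrix n n R)).jacobson ↔ ∀ i j, B i j ∈ (⊥ : Ideal R).jacobson := by
  rw [← TwoSidedIdeal.bot_asIdeal, ← TwoSidedIdeal.asIdeal_jacobson,
    ← TwoSidedIdeal.matrix_jacobson_bot, TwoSidedIdeal.asIdeal_matrix, Ideal.mem_matrix,
    TwoSidedIdeal.asIdeal_jacobson, TwoSidedIdeal.bot_asIdeal]

theorem Matrix.trace_mem_jacobson_bot {R : Type*} [Ring R] {n : Type*} [Fintype n]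
    [DecidableEq n] {B : Matrix n n R} (hB : B ∈ (⊥ : Ideal (Matrix n n R)).jacobson) :
    B.trace ∈ (⊥ : Ideal R).jacobson :=
  sum_mem fun i _ ↦ Matrix.mem_jacobson_bot_iff_s19.1 hB i i

theorem PowerSeries.mem_jacobson_bot_iff_s19 {R : Type*} [CommRing R] {f : R⟦X⟧} :
    f ∈ (⊥ : Ideal R⟦X⟧).jacobson ↔ constantCoeff f ∈ (⊥ : Ideal R).jacobson := by
  simp only [Ideal.mem_jacobson_bot, isUnit_iff_constantCoeff, map_add, map_mul, map_one]
  exact ⟨fun h y ↦ by simpa using h (C y), fun h g ↦ h _⟩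

theorem Matrix.map_constantCoeff_mem_jacobson_bot_iff {R : Type*} [CommRing R] {n : Type*}
    [Fintype n] [DecidableEq n] {B : Matrix n n R⟦X⟧} :
    B.map constantCoeff ∈ (⊥ : Ideal (Matrix n n R)).jacobson ↔
      B ∈ (⊥ : Ideal (Matrix n n R⟦X⟧)).jacobson := by
  simp [Matrix.mem_jacobson_bot_iff_s19, PowerSeries.mem_jacobson_bot_iff_s19]

theorem PowerSeries.exists_isRoot_constantCoeff_eq {R : Type*} [CommRing R]
    {p : Polynomial R⟦X⟧} (hp : p.Monic) {a : R} (ha : (p.map constantCoeff).IsRoot a)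
    (ha' : IsUnit ((p.map constantCoeff).derivative.eval a)) :
    ∃ α : R⟦X⟧, p.IsRoot α ∧ constantCoeff α = a := by
  have hX (f : R⟦X⟧) : f ∈ Ideal.span {X} ↔ constantCoeff f = 0 := by
    rw [Ideal.mem_span_singleton, X_dvd_iff]
  rw [← constantCoeff_C a, Polynomial.IsRoot, Polynomial.eval_map_apply, ← hX] at ha
  rw [← constantCoeff_C a, Polynomial.derivative_map, Polynomial.eval_map_apply,
    ← isUnit_iff_constantCoeff] at ha'
  obtain ⟨α, hα, hαa⟩ := HenselianRing.is_henselian p hp (C a) ha (ha'.map _)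
  rw [hX, map_sub, constantCoeff_C, sub_eq_zero] at hαa
  exact ⟨α, hα, hαa⟩

section SplitAlongIdempotent

variable {K S : Type*} [CommRing K] [Ring S] [Algebra K S] {ε : K}

theorem IsIdempotentElem.smul_add_one_sub_smul (hε : IsIdempotentElem ε) {e f : S}
    (he : IsIdempotentElem e) (hf : IsIdempotentElem f) :
    IsIdempotentElem (ε • e + (1 - ε) • f) := by
  have hε' : ε * (1 - ε) = 0 := by rw [mul_sub, mul_one, hε.eq, sub_self]
  simp only [IsIdempotentElem, add_mul, mul_add, smul_mul_smul_comm, hε.eq, hε.one_sub.eq, he.eq,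
    hf.eq, hε', mul_comm (1 - ε) ε, zero_smul, add_zero, zero_add]

theorem Commute.smul_add_one_sub_smul (hε : IsIdempotentElem ε) {a b e f : S}
    (hae : Commute a e) (hbf : Commute b f) :
    Commute (ε • a + (1 - ε) • b) (ε • e + (1 - ε) • f) := by
  have hε' : ε * (1 - ε) = 0 := by rw [mul_sub, mul_one, hε.eq, sub_self]
  simp only [Commute, SemiconjBy, add_mul, mul_add, smul_mul_smul_comm, hε.eq, hε.one_sub.eq,
    hae.eq, hbf.eq, hε', mul_comm (1 - ε) ε, zero_smul, add_zero, zero_add]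

theorem IsStronglyJClean.smul_add_one_sub_smul (hε : IsIdempotentElem ε) {b c : S}
    (hb : IsStronglyJClean b) (hc : IsStronglyJClean c) :
    IsStronglyJClean (ε • b + (1 - ε) • c) := by
  obtain ⟨e, he, hbe, hb⟩ := hb
  obtain ⟨f, hf, hcf, hc⟩ := hc
  refine ⟨ε • e + (1 - ε) • f, hε.smul_add_one_sub_smul he hf, ?_,
    Commute.smul_add_one_sub_smul hε hb hc⟩
  rw [add_sub_add_comm, ← smul_sub, ← smul_sub]
  exact add_mem (Submodule.smul_of_tower_mem _ _ hbe) (Submodule.smul_of_tower_mem _ _ hcf)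

end SplitAlongIdempotent

theorem IsStronglyJClean.map {S T : Type*} [Ring S] [Ring T] (f : S →+* T)
    (hf : (⊥ : Ideal S).jacobson ≤ (⊥ : Ideal T).jacobson.comap f) {a : S}
    (ha : IsStronglyJClean a) : IsStronglyJClean (f a) := by
  obtain ⟨e, he, hJ, hc⟩ := ha
  exact ⟨f e, he.map f, by simpa using hf hJ, by rw [← map_mul, hc, map_mul]⟩

namespace Matrix

variable {R : Type*} [CommRing R]

theorem mul_self_fin_two (M : Matrix (Fin 2) (Fin 2) R) :
    M * M = M.trace • M - M.det • 1 := by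
  ext i j
  fin_cases i <;> fin_cases j <;> simp [mul_apply, trace_fin_two, det_fin_two] <;> ring

theorem mul_add_mul_fin_two (M N : Matrix (Fin 2) (Fin 2) R) :
    M * N + N * M = M.trace • N + N.trace • M + ((M * N).trace - M.trace * N.trace) • 1 := by
  ext i j
  fin_cases i <;> fin_cases j <;> simp [mul_apply, trace_fin_two] <;> ring

theorem isIdempotentElem_det_of_isIdempotentElem {n : Type*} [Fintype n] [DecidableEq n]
    {E : Matrix n n R} (hE : IsIdempotentElem E) : IsIdempotentElem E.det :=
  hE.map detMonoidHom

/-- For an idempotent `E`, this is the idempotent of `R` cutting out the locus where `E` has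
rank one (as `det E` cuts out the locus where `E = 1`). -/
def rankOneIdempotent (E : Matrix (Fin 2) (Fin 2) R) : R := E.trace - 2 * E.det

section Idempotent

variable {E : Matrix (Fin 2) (Fin 2) R} (hE : IsIdempotentElem E)
include hE

theorem trace_sub_one_smul_of_isIdempotentElem : (E.trace - 1) • E = E.det • 1 := by
  have := mul_self_fin_two E
  rw [hE.eq] at this
  linear_combination (norm := module) -this

theorem det_smul_of_isIdempotentElem : E.det • E = E.det • 1 := by
  have h := trace_sub_one_smul_of_isIdempotentElem hE
  have := congrArg (· * E) h
  simp only [smul_mul_assoc, hE.eq, one_mul] at this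
  linear_combination (norm := module) -this + h

theorem trace_mul_trace_of_isIdempotentElem : E.trace * E.trace = E.trace + 2 * E.det := by
  have := congrArg trace (trace_sub_one_smul_of_isIdempotentElem hE)
  simp only [trace_smul, trace_one, smul_eq_mul, Fintype.card_fin] at this
  linear_combination this

theorem det_mul_trace_of_isIdempotentElem : E.det * E.trace = 2 * E.det := by
  have := congrArg trace (det_smul_of_isIdempotentElem hE)
  simp only [trace_smul, trace_one, smul_eq_mul, Fintype.card_fin] at this
  linear_combination this

theorem isIdempotentElem_rankOneIdempotent : IsIdempotentElem (rankOneIdempotent E) := by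
  have := (isIdempotentElem_det_of_isIdempotentElem hE).eq
  unfold IsIdempotentElem rankOneIdempotent
  linear_combination trace_mul_trace_of_isIdempotentElem hE -
    4 * det_mul_trace_of_isIdempotentElem hE + 4 * this

theorem rankOneIdempotent_mul_trace : rankOneIdempotent E * E.trace = rankOneIdempotent E := by
  unfold rankOneIdempotent
  linear_combination trace_mul_trace_of_isIdempotentElem hE -
    2 * det_mul_trace_of_isIdempotentElem hE

theorem one_sub_rankOneIdempotent_smul : (1 - rankOneIdempotent E) • E = E.det • 1 := by
  unfold rankOneIdempotent
  linear_combination (norm := module) -trace_sub_one_smul_of_isIdempotentElem hE +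
    (2 : R) • det_smul_of_isIdempotentElem hE

end Idempotent

theorem trace_mul_sq_sub_trace_mul_add_det_eq_zero {B F : Matrix (Fin 2) (Fin 2) R}
    (hF : IsIdempotentElem F) (hF₁ : F.trace = 1) (hBF : Commute B F) :
    (B * F).trace ^ 2 - B.trace * (B * F).trace + B.det = 0 := by
  set s := (B * F).trace
  have hFBF : F * (B * F) = B * F := by rw [← mul_assoc, ← hBF.eq, mul_assoc, hF.eq]
  have hBF_eq : B * F = s • F := by
    have h := mul_add_mul_fin_two F (B * F)
    rw [hFBF, mul_assoc, hF.eq, hF₁] at h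
    linear_combination (norm := module) h
  have h := congrArg (· * F) (mul_self_fin_two B)
  simp only [Matrix.sub_mul, smul_mul_assoc, one_mul, mul_assoc, hBF_eq, mul_smul_comm] at h
  have hroot : (s ^ 2 - B.trace * s + B.det) • F = 0 := by
    linear_combination (norm := module) h
  simpa [hF₁] using congrArg trace hroot

theorem isStronglyJClean_of_root_mem_jacobson {A : Matrix (Fin 2) (Fin 2) R} {α : R}
    (hα : α ^ 2 - A.trace * α + A.det = 0) (hαJ : α ∈ (⊥ : Ideal R).jacobson)
    (hAα : A.trace - 2 * α - 1 ∈ (⊥ : Ideal R).jacobson) :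
    IsStronglyJClean A := by
  obtain ⟨v, hv⟩ := (Ideal.isUnit_of_sub_one_mem_jacobson_bot _ hAα).exists_left_inv
  have hsq : (A - α • 1) * (A - α • 1) = (A.trace - 2 * α) • (A - α • 1) := by
    have := mul_self_fin_two A
    simp only [Matrix.sub_mul, Matrix.mul_sub, smul_mul_assoc, mul_smul_comm, one_mul,
      mul_one] at this ⊢
    linear_combination (norm := module) this - hα • (1 : Matrix (Fin 2) (Fin 2) R)
  refine ⟨v • (A - α • 1), ?_, ?_, ?_⟩
  · rw [IsIdempotentElem, smul_mul_smul_comm, hsq, smul_smul, mul_assoc, hv, mul_one]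
  · have hAE : A - v • (A - α • 1) = v • ((A.trace - 2 * α - 1) • A + α • 1) := by
      linear_combination (norm := module) -(hv • A)
    rw [hAE, mem_jacobson_bot_iff_s19]
    intro i j
    simp only [smul_apply, add_apply, smul_eq_mul]
    exact Ideal.mul_mem_left _ _
      (add_mem (Ideal.mul_mem_right _ _ hAα) (Ideal.mul_mem_right _ _ hαJ))
  · simp only [mul_smul_comm, smul_mul_assoc, Matrix.mul_sub, Matrix.sub_mul, one_mul, mul_one]

section PowerSeries

variable {A : Matrix (Fin 2) (Fin 2) R⟦X⟧} {E : Matrix (Fin 2) (Fin 2) R}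

theorem isStronglyJClean_of_map_constantCoeff_of_trace_eq_one (hE : IsIdempotentElem E)
    (hE₁ : E.trace = 1) (hAE : Commute (A.map constantCoeff) E)
    (hAEJ : A.map constantCoeff - E ∈ (⊥ : Ideal (Matrix (Fin 2) (Fin 2) R)).jacobson) :
    IsStronglyJClean A := by
  set A₀ := A.map constantCoeff
  have hF₁ : (1 - E).trace = 1 := by
    rw [trace_sub, hE₁, trace_one, Fintype.card_fin]; norm_num
  set s := (A₀ * (1 - E)).trace
  have hs : s ^ 2 - A₀.trace * s + A₀.det = 0 :=
    trace_mul_sq_sub_trace_mul_add_det_eq_zero hE.one_sub hF₁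
      ((Commute.one_right _).sub_right hAE)
  have hsJ : s ∈ (⊥ : Ideal R).jacobson := by
    have : A₀ * (1 - E) = (A₀ - E) * (1 - E) := by
      rw [Matrix.sub_mul, Matrix.mul_sub E, mul_one, hE.eq, sub_self, sub_zero]
    exact trace_mem_jacobson_bot (this ▸ Ideal.mul_mem_right _ _ hAEJ)
  have hTJ : A₀.trace - 2 * s - 1 ∈ (⊥ : Ideal R).jacobson := by
    have : A₀.trace - 1 = (A₀ - E).trace := by rw [trace_sub, hE₁]
    rw [sub_right_comm, this]
    exact sub_mem (trace_mem_jacobson_bot hAEJ) (Ideal.mul_mem_left _ _ hsJ)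
  have hT : constantCoeff A.trace = A₀.trace := AddMonoidHom.map_trace _ _
  have hD : constantCoeff A.det = A₀.det := RingHom.map_det _ _
  obtain ⟨α, hα, hαs⟩ := exists_isRoot_constantCoeff_eq
    (p := .X ^ 2 - .C (A.trace) * .X + .C (A.det)) (a := s) (by monicity!)
    (by simpa [hT, hD] using hs)
    (by
      convert (Ideal.isUnit_of_sub_one_mem_jacobson_bot _ hTJ).neg using 1
      simp [hT]
      ring)
  refine isStronglyJClean_of_root_mem_jacobson (α := α) (by simpa using hα)
    (PowerSeries.mem_jacobson_bot_iff_s19.2 (hαs ▸ hsJ)) (PowerSeries.mem_jacobson_bot_iff_s19.2 ?_)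
  simpa [hT, hαs, map_ofNat] using hTJ

variable (hE : IsIdempotentElem E)
  (hAEJ : A.map constantCoeff - E ∈ (⊥ : Ideal (Matrix (Fin 2) (Fin 2) R)).jacobson)
include hE hAEJ

theorem isStronglyJClean_rankOneIdempotent_smul_add_one_sub_smul_single
    (hAE : Commute (A.map constantCoeff) E) :
    IsStronglyJClean (E.rankOneIdempotent • A + (1 - E.rankOneIdempotent) • single 0 0 1) := by
  set ε := E.rankOneIdempotent
  have hε := isIdempotentElem_rankOneIdempotent hE
  have hP : IsIdempotentElem (single 0 0 1 : Matrix (Fin 2) (Fin 2) R) := by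
    simp [IsIdempotentElem]
  have hmap : (ε • A + (1 - ε) • single 0 0 1).map constantCoeff =
      ε • A.map constantCoeff + (1 - ε) • single 0 0 1 := by
    ext i j
    fin_cases i <;> fin_cases j <;> simp
  refine isStronglyJClean_of_map_constantCoeff_of_trace_eq_one
    (hε.smul_add_one_sub_smul hE hP) ?_ ?_ ?_
  · rw [trace_add, trace_smul, trace_smul, trace_single_eq_same, smul_eq_mul, smul_eq_mul,
      rankOneIdempotent_mul_trace hE]
    ring
  · rw [hmap]
    exact Commute.smul_add_one_sub_smul hε hAE (Commute.refl _)
  · rw [hmap, add_sub_add_right_eq_sub, ← smul_sub]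
    exact Submodule.smul_of_tower_mem _ ε hAEJ

theorem isStronglyJClean_one_sub_rankOneIdempotent_smul :
    IsStronglyJClean ((1 - E.rankOneIdempotent) • A) := by
  refine ⟨E.det • 1, ?_, ?_, ?_⟩
  · rw [IsIdempotentElem, smul_mul_smul_comm, one_mul,
      (isIdempotentElem_det_of_isIdempotentElem hE).eq]
  · have hmap : ((1 - E.rankOneIdempotent) • A - E.det • 1).map constantCoeff =
        (1 - E.rankOneIdempotent) • (A.map constantCoeff - E) := by
      rw [smul_sub, one_sub_rankOneIdempotent_smul hE]
      ext i j
      by_cases hij : i = j <;> simp [hij]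
    rw [← map_constantCoeff_mem_jacobson_bot_iff, hmap]
    exact Submodule.smul_of_tower_mem _ _ hAEJ
  · simp only [smul_mul_smul_comm, mul_one, one_mul, mul_comm]

end PowerSeries

end Matrix

theorem stronglyJClean_matrix_powerSeries_iff_of_isPSFRing_general {R : Type u} [CommRing R]
    (A : Matrix (Fin 2) (Fin 2) (PowerSeries R)) :
    IsStronglyJClean A ↔ IsStronglyJClean (A.map (PowerSeries.constantCoeff (R := R))) := by
  constructor
  · intro h
    exact h.map constantCoeff.mapMatrix fun _ hB ↦
      Ideal.mem_comap.2 (Matrix.map_constantCoeff_mem_jacobson_bot_iff.2 hB)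
  · rintro ⟨E, hE, hAEJ, hAE⟩
    set ε := E.rankOneIdempotent
    have hε : IsIdempotentElem ε := Matrix.isIdempotentElem_rankOneIdempotent hE
    -- Off the rank-one locus of `E`, replace `A` by a matrix lifting a rank-one idempotent.
    have hA : A = ε • (ε • A + (1 - ε) • Matrix.single 0 0 1) + (1 - ε) • ((1 - ε) • A) := by
      linear_combination (norm := module) hε.eq • (Matrix.single 0 0 1 - (2 : R) • A)
    rw [hA]
    exact IsStronglyJClean.smul_add_one_sub_smul hε
      (Matrix.isStronglyJClean_rankOneIdempotent_smul_add_one_sub_smul_single hE hAEJ hAE)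
      (Matrix.isStronglyJClean_one_sub_rankOneIdempotent_smul hE hAEJ)

theorem stronglyJClean_matrix_powerSeries_iff_of_isPSFRing {R : Type u} [CommRing R]
    (hR : IsPSFRing R) (A : Matrix (Fin 2) (Fin 2) (PowerSeries R)) :
    IsStronglyJClean A ↔ IsStronglyJClean (A.map (PowerSeries.constantCoeff (R := R))) :=
  stronglyJClean_matrix_powerSeries_iff_of_isPSFRing_general A
end
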